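/- arXiv:1709.01919 — 2 statements merged into one kernel-verified Lean document; each statement's English description precedes it below -/
import Mathlib

section
/- Let μ > 0 and let f : (ℝ^{p×p})^K → ℝ be a differentiable function on K-tuples of p × p real matrices (equipped with the inner product ⟨Θ, Θ'⟩ = Σ_{k=1}^K tr(Θ_kᵀ Θ'_k) and the induced norm ‖Θ‖ with ‖Θ‖² = Σ_k ‖Θ_k‖_F²) that is μ-strongly convex: f(Θ') ≥ f(Θ) + ⟨∇f(Θ), Θ' − Θ⟩ + (μ/2)‖Θ' − Θ‖² for all Θ, Θ'. Let Θ̂ = (Θ̂_1, …, Θ̂_K) be a global minimizer of f, let Θ* = (Θ*_1, …, Θ*_K) satisfy rank(Θ*_k) ≤ 1 for every k, and for each k let R_k be a best rank-one approximation of Θ̂_k in Frobenius norm (rank(R_k) ≤ 1 and ‖R_k − Θ̂_k‖_F ≤ ‖S − Θ̂_k‖_F for all S with rank(S) ≤ 1). Then for every k, ‖R_k − Θ*_k‖_F ≤ (4/μ)·‖∇f(Θ*)‖. -/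
open Matrix
/-- Frobenius norm of a real matrix. -/
noncomputable def frobNorm {p : ℕ} (A : Matrix (Fin p) (Fin p) ℝ) : ℝ :=
  Real.sqrt (∑ i, ∑ j, (A i j) ^ 2)

/-- Trace inner product on `K`-tuples of `p × p` matrices:
`⟨Θ, Θ'⟩ = Σ_k tr(Θ_kᵀ Θ'_k)`. -/
noncomputable def tupInner {p K : ℕ} (Θ Θ' : Fin K → Matrix (Fin p) (Fin p) ℝ) : ℝ :=
  ∑ k, ((Θ k)ᵀ * Θ' k).trace

/-- The norm induced by the trace inner product, `‖Θ‖² = Σ_k ‖Θ_k‖_F²`. -/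
noncomputable def tupNorm {p K : ℕ} (Θ : Fin K → Matrix (Fin p) (Fin p) ℝ) : ℝ :=
  Real.sqrt (tupInner Θ Θ)

/-! Strong convexity between `Θ*` and the minimizer `Θ̂`, together with `f Θ̂ ≤ f Θ*` and
Cauchy–Schwarz, gives `(μ/2)‖Θ̂ − Θ*‖² ≤ ‖∇f(Θ*)‖ ‖Θ̂ − Θ*‖`, i.e. `‖Θ̂ − Θ*‖ ≤ (2/μ)‖∇f(Θ*)‖`.
Since `Θ*_k` is itself a rank-one competitor, `R_k` is no farther from `Θ̂_k` than `Θ*_k` is,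
and the triangle inequality doubles the bound. -/

open scoped InnerProductSpace

theorem norm_le_of_inner_add_sq_nonpos {E : Type*} [NormedAddCommGroup E] [InnerProductSpace ℝ E]
    {μ : ℝ} (hμ : 0 < μ) {g d : E} (h : ⟪g, d⟫_ℝ + μ / 2 * ‖d‖ ^ 2 ≤ 0) :
    ‖d‖ ≤ 2 / μ * ‖g‖ := by
  have hcs : -(‖g‖ * ‖d‖) ≤ ⟪g, d⟫_ℝ := neg_le_of_abs_le (abs_real_inner_le_norm g d)
  rw [div_mul_eq_mul_div, le_div_iff₀ hμ]
  rcases (norm_nonneg d).eq_or_lt with hd | hd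
  · rw [← hd, zero_mul]; positivity
  · nlinarith

theorem norm_sub_le_two_mul_of_norm_sub_le {E : Type*} [SeminormedAddCommGroup E] {r s a : E}
    (h : ‖r - a‖ ≤ ‖s - a‖) : ‖r - s‖ ≤ 2 * ‖a - s‖ := by
  rw [norm_sub_rev s a] at h
  linarith [norm_sub_le_norm_sub_add_norm_sub r a s]

section

variable {p K : ℕ}

def tupleVec (Θ : Fin K → Matrix (Fin p) (Fin p) ℝ) : EuclideanSpace ℝ (Fin K × Fin p × Fin p) :=
  WithLp.toLp 2 fun x => Θ x.1 x.2.1 x.2.2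

lemma tupInner_eq_inner (Θ Θ' : Fin K → Matrix (Fin p) (Fin p) ℝ) :
    tupInner Θ Θ' = ⟪tupleVec Θ, tupleVec Θ'⟫_ℝ := by
  simp only [tupInner, trace, diag_apply, Matrix.mul_apply, transpose_apply, tupleVec,
    PiLp.inner_apply, RCLike.inner_apply, Real.ringHom_apply, Fintype.sum_prod_type]
  refine Finset.sum_congr rfl fun k _ => ?_
  rw [Finset.sum_comm]
  simp only [mul_comm]

lemma tupNorm_eq_norm (Θ : Fin K → Matrix (Fin p) (Fin p) ℝ) : tupNorm Θ = ‖tupleVec Θ‖ := by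
  rw [tupNorm, tupInner_eq_inner, real_inner_self_eq_norm_sq, Real.sqrt_sq (norm_nonneg _)]

lemma tupNorm_sq (Θ : Fin K → Matrix (Fin p) (Fin p) ℝ) :
    tupNorm Θ ^ 2 = ∑ k, frobNorm (Θ k) ^ 2 := by
  simp only [tupNorm_eq_norm, tupleVec, EuclideanSpace.norm_sq_eq, Real.norm_eq_abs, sq_abs,
    Fintype.sum_prod_type, frobNorm]
  exact Finset.sum_congr rfl fun k _ => (Real.sq_sqrt (by positivity)).symm

lemma frobNorm_le_tupNorm (Θ : Fin K → Matrix (Fin p) (Fin p) ℝ) (k : Fin K) :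
    frobNorm (Θ k) ≤ tupNorm Θ := by
  have hsq : frobNorm (Θ k) ^ 2 ≤ tupNorm Θ ^ 2 := by
    rw [tupNorm_sq]
    exact Finset.single_le_sum (fun k _ => sq_nonneg (frobNorm (Θ k))) (Finset.mem_univ k)
  exact (pow_le_pow_iff_left₀ (Real.sqrt_nonneg _) (Real.sqrt_nonneg _) two_ne_zero).mp hsq

attribute [local instance] Matrix.frobeniusNormedAddCommGroup

lemma frobNorm_eq_norm (A : Matrix (Fin p) (Fin p) ℝ) : frobNorm A = ‖A‖ := by
  simp [frobNorm, Matrix.frobenius_norm_def, Real.sqrt_eq_rpow]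

lemma frobNorm_sub_le_two_mul_of_frobNorm_sub_le {R S A : Matrix (Fin p) (Fin p) ℝ}
    (h : frobNorm (R - A) ≤ frobNorm (S - A)) : frobNorm (R - S) ≤ 2 * frobNorm (A - S) := by
  simp only [frobNorm_eq_norm] at h ⊢
  exact norm_sub_le_two_mul_of_norm_sub_le h

end

theorem stmt_2_general {p K : ℕ}
    (μ : ℝ) (hμ : 0 < μ)
    (f : (Fin K → Matrix (Fin p) (Fin p) ℝ) → ℝ)
    (gradf : (Fin K → Matrix (Fin p) (Fin p) ℝ) → (Fin K → Matrix (Fin p) (Fin p) ℝ))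
    (hsc : ∀ Θ Θ' : Fin K → Matrix (Fin p) (Fin p) ℝ,
      f Θ' ≥ f Θ + tupInner (gradf Θ) (Θ' - Θ) + μ / 2 * tupNorm (Θ' - Θ) ^ 2)
    (Θhat : Fin K → Matrix (Fin p) (Fin p) ℝ)
    (hmin : ∀ Θ, f Θhat ≤ f Θ)
    (Θstar : Fin K → Matrix (Fin p) (Fin p) ℝ)
    (hstar : ∀ k, (Θstar k).rank ≤ 1)
    (R : Fin K → Matrix (Fin p) (Fin p) ℝ)
    (hbest : ∀ k, ∀ S : Matrix (Fin p) (Fin p) ℝ, S.rank ≤ 1 →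
      frobNorm (R k - Θhat k) ≤ frobNorm (S - Θhat k)) :
    ∀ k, frobNorm (R k - Θstar k) ≤ 4 / μ * tupNorm (gradf Θstar) := by
  intro k
  have hdist : tupNorm (Θhat - Θstar) ≤ 2 / μ * tupNorm (gradf Θstar) := by
    have hstep := hsc Θstar Θhat
    rw [tupInner_eq_inner, tupNorm_eq_norm] at hstep
    rw [tupNorm_eq_norm, tupNorm_eq_norm]
    exact norm_le_of_inner_add_sq_nonpos hμ (by linarith [hmin Θstar])
  calc frobNorm (R k - Θstar k) ≤ 2 * frobNorm (Θhat k - Θstar k) :=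
        frobNorm_sub_le_two_mul_of_frobNorm_sub_le (hbest k (Θstar k) (hstar k))
    _ ≤ 2 * tupNorm (Θhat - Θstar) := by gcongr; exact frobNorm_le_tupNorm (Θhat - Θstar) k
    _ ≤ 2 * (2 / μ * tupNorm (gradf Θstar)) := by gcongr
    _ = 4 / μ * tupNorm (gradf Θstar) := by ring

/-- If `f` is `μ`-strongly convex on `K`-tuples of matrices (with gradient `gradf` with respect
to the trace inner product), `Θhat` is a global minimizer of `f`, each `Θstar_k` has rank at
most one, and each `R k` is a best rank-one approximation of `Θhat k` in Frobenius norm, then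
`‖R_k − Θstar_k‖_F ≤ (4/μ)·‖∇f(Θstar)‖` for every `k`. -/
theorem stmt_2 {p K : ℕ}
    (μ : ℝ) (hμ : 0 < μ)
    (f : (Fin K → Matrix (Fin p) (Fin p) ℝ) → ℝ)
    (gradf : (Fin K → Matrix (Fin p) (Fin p) ℝ) → (Fin K → Matrix (Fin p) (Fin p) ℝ))
    (hsc : ∀ Θ Θ' : Fin K → Matrix (Fin p) (Fin p) ℝ,
      f Θ' ≥ f Θ + tupInner (gradf Θ) (Θ' - Θ) + μ / 2 * tupNorm (Θ' - Θ) ^ 2)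
    (Θhat : Fin K → Matrix (Fin p) (Fin p) ℝ)
    (hmin : ∀ Θ, f Θhat ≤ f Θ)
    (Θstar : Fin K → Matrix (Fin p) (Fin p) ℝ)
    (hstar : ∀ k, (Θstar k).rank ≤ 1)
    (R : Fin K → Matrix (Fin p) (Fin p) ℝ)
    (hRrank : ∀ k, (R k).rank ≤ 1)
    (hbest : ∀ k, ∀ S : Matrix (Fin p) (Fin p) ℝ, S.rank ≤ 1 →
      frobNorm (R k - Θhat k) ≤ frobNorm (S - Θhat k)) :
    ∀ k, frobNorm (R k - Θstar k) ≤ 4 / μ * tupNorm (gradf Θstar) :=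
  stmt_2_general μ hμ f gradf hsc Θhat hmin Θstar hstar R hbest
end

section
/- Let E be a finite-dimensional real inner product space, let 0 < μ ≤ L, and let f : E → ℝ be differentiable, μ-strongly convex (f(y) ≥ f(x) + ⟨∇f(x), y − x⟩ + (μ/2)‖y − x‖² for all x, y), and L-smooth (‖∇f(x) − ∇f(y)‖ ≤ L‖x − y‖ for all x, y). Then for all x, y ∈ E: ⟨∇f(x) − ∇f(y), x − y⟩ ≥ (μL/(μ + L))·‖x − y‖² + (1/(μ + L))·‖∇f(x) − ∇f(y)‖². -/
/-!
`h = f - μ/2 ‖·‖²` is convex and `(L - μ)`-smooth, with gradient `∇f - μ • id`. For a convex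
`c`-smooth function, evaluating the upper quadratic model at `x` and the linear lower model at `y`
at the point `x - c⁻¹ (∇h x - ∇h y)` and symmetrising gives the cocoercivity
`‖∇h x - ∇h y‖² ≤ c ⟪∇h x - ∇h y, x - y⟫`; substituting `∇h = ∇f - μ • id` is exactly the claim.
When `μ = L`, strong monotonicity and the Lipschitz bound force `∇f x - ∇f y = μ • (x - y)`.
-/

open scoped RealInnerProductSpace

section

variable {E : Type*} [NormedAddCommGroup E] [InnerProductSpace ℝ E]

lemma half_sq_norm_sub_half_sq_norm_sub_inner (x y : E) :
    ‖y‖ ^ 2 / 2 - ‖x‖ ^ 2 / 2 - ⟪x, y - x⟫ = ‖y - x‖ ^ 2 / 2 := by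
  rw [inner_sub_right, real_inner_self_eq_norm_sq, norm_sub_sq_real, real_inner_comm]
  ring

lemma sq_norm_sub_le_mul_bregman {F : E → ℝ} {G : E → E} {c : ℝ} (hc : 0 < c)
    (hlower : ∀ x y, F x + ⟪G x, y - x⟫ ≤ F y)
    (hupper : ∀ x y, F y ≤ F x + ⟪G x, y - x⟫ + c / 2 * ‖y - x‖ ^ 2) (x y : E) :
    ‖G x - G y‖ ^ 2 ≤ 2 * c * (F x - F y - ⟪G y, x - y⟫) := by
  set g := G x - G y
  set z := x - c⁻¹ • g
  have hzx : z - x = -(c⁻¹ • g) := by simp [z]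
  have hzy : ⟪G y, z - y⟫ = ⟪G y, x - y⟫ + ⟪G y, z - x⟫ := by
    rw [← inner_add_right, sub_add_sub_cancel']
  have hinner : ⟪G x, z - x⟫ - ⟪G y, z - x⟫ = -(c⁻¹ * ‖g‖ ^ 2) := by
    rw [← inner_sub_left, hzx, inner_neg_right, real_inner_smul_right,
      real_inner_self_eq_norm_sq]
  have hnorm : ‖z - x‖ ^ 2 = c⁻¹ ^ 2 * ‖g‖ ^ 2 := by
    rw [hzx, norm_neg, norm_smul, mul_pow, Real.norm_eq_abs, sq_abs]
  have hgap : ‖g‖ ^ 2 / (2 * c) ≤ F x - F y - ⟪G y, x - y⟫ := by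
    have hcancel : c / 2 * (c⁻¹ ^ 2 * ‖g‖ ^ 2) - c⁻¹ * ‖g‖ ^ 2 = -(‖g‖ ^ 2 / (2 * c)) := by
      field_simp
      ring
    have hup := hupper x z
    rw [hnorm] at hup
    linarith [hlower y z]
  rwa [div_le_iff₀' (by positivity)] at hgap

lemma sq_norm_sub_le_mul_inner_sub {F : E → ℝ} {G : E → E} {c : ℝ} (hc : 0 < c)
    (hlower : ∀ x y, F x + ⟪G x, y - x⟫ ≤ F y)
    (hupper : ∀ x y, F y ≤ F x + ⟪G x, y - x⟫ + c / 2 * ‖y - x‖ ^ 2) (x y : E) :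
    ‖G x - G y‖ ^ 2 ≤ c * ⟪G x - G y, x - y⟫ := by
  have hxy := sq_norm_sub_le_mul_bregman hc hlower hupper x y
  have hyx := sq_norm_sub_le_mul_bregman hc hlower hupper y x
  rw [norm_sub_rev] at hyx
  have hsum : ⟪G y, x - y⟫ + ⟪G x, y - x⟫ = -⟪G x - G y, x - y⟫ := by
    rw [← neg_sub x y, inner_neg_right, inner_sub_left]
    ring
  nlinarith

lemma mul_sq_norm_sub_le_inner_sub {f : E → ℝ} {G : E → E} {μ : ℝ}
    (hsc : ∀ x y, f y ≥ f x + ⟪G x, y - x⟫ + μ / 2 * ‖y - x‖ ^ 2) (x y : E) :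
    μ * ‖x - y‖ ^ 2 ≤ ⟪G x - G y, x - y⟫ := by
  have hxy := hsc x y
  have hyx := hsc y x
  rw [← neg_sub x y, inner_neg_right, norm_neg] at hxy
  rw [inner_sub_left]
  linarith

variable [CompleteSpace E]

lemma hasDerivAt_comp_add_smul {f : E → ℝ} {x v : E} {t : ℝ}
    (hf : DifferentiableAt ℝ f (x + t • v)) :
    HasDerivAt (fun s : ℝ => f (x + s • v)) ⟪gradient f (x + t • v), v⟫ t := by
  have hline : HasDerivAt (fun s : ℝ => x + s • v) v t := by
    simpa using ((hasDerivAt_id t).smul_const v).const_add x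
  simpa [InnerProductSpace.toDual_apply_apply, Function.comp_def] using
    hf.hasGradientAt.hasFDerivAt.comp_hasDerivAt t hline

lemma le_add_inner_gradient_add_sq_norm {f : E → ℝ} {L : ℝ} (hdiff : Differentiable ℝ f)
    (hsmooth : ∀ x y, ‖gradient f x - gradient f y‖ ≤ L * ‖x - y‖) (x y : E) :
    f y ≤ f x + ⟪gradient f x, y - x⟫ + L / 2 * ‖y - x‖ ^ 2 := by
  set v := y - x
  set φ : ℝ → ℝ := fun t => f (x + t • v) - t * ⟪gradient f x, v⟫ - L * ‖v‖ ^ 2 / 2 * t ^ 2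
  have hφ : ∀ t, HasDerivAt φ
      (⟪gradient f (x + t • v), v⟫ - ⟪gradient f x, v⟫ - L * ‖v‖ ^ 2 / 2 * (2 * t)) t := by
    intro t
    refine ((hasDerivAt_comp_add_smul (hdiff _)).sub (hasDerivAt_mul_const _)).sub ?_
    simpa using (hasDerivAt_pow 2 t).const_mul (L * ‖v‖ ^ 2 / 2)
  have hanti : AntitoneOn φ (Set.Icc 0 1) := by
    refine antitoneOn_of_hasDerivWithinAt_nonpos (convex_Icc 0 1)
      (continuous_iff_continuousAt.2 fun t => (hφ t).continuousAt).continuousOn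
      (fun t _ => (hφ t).hasDerivWithinAt) fun t ht => ?_
    rw [interior_Icc] at ht
    have hcs : ⟪gradient f (x + t • v) - gradient f x, v⟫
        ≤ ‖gradient f (x + t • v) - gradient f x‖ * ‖v‖ := real_inner_le_norm _ _
    have hlip : ‖gradient f (x + t • v) - gradient f x‖ ≤ L * (t * ‖v‖) := by
      simpa [norm_smul, abs_of_pos ht.1] using hsmooth (x + t • v) x
    rw [inner_sub_left] at hcs
    nlinarith [norm_nonneg v, ht.1]
  have hend := hanti (Set.left_mem_Icc.2 zero_le_one) (Set.right_mem_Icc.2 zero_le_one)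
    zero_le_one
  simp only [φ, v, one_smul, zero_smul, add_zero, add_sub_cancel] at hend
  linarith

end

/-- Co-coercivity: if `f` is differentiable, `μ`-strongly convex and `L`-smooth on a
finite-dimensional real inner product space, then
`⟨∇f(x) − ∇f(y), x − y⟩ ≥ (μL/(μ+L))‖x−y‖² + (1/(μ+L))‖∇f(x) − ∇f(y)‖²`. -/
theorem stmt_3
    {E : Type*} [NormedAddCommGroup E] [InnerProductSpace ℝ E] [FiniteDimensional ℝ E]
    (μ L : ℝ) (hμ : 0 < μ) (hμL : μ ≤ L)
    (f : E → ℝ) (hdiff : ∀ x, DifferentiableAt ℝ f x)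
    (hsc : ∀ x y : E, f y ≥ f x + ⟪gradient f x, y - x⟫ + μ / 2 * ‖y - x‖ ^ 2)
    (hsmooth : ∀ x y : E, ‖gradient f x - gradient f y‖ ≤ L * ‖x - y‖) :
    ∀ x y : E, ⟪gradient f x - gradient f y, x - y⟫ ≥
      μ * L / (μ + L) * ‖x - y‖ ^ 2 + 1 / (μ + L) * ‖gradient f x - gradient f y‖ ^ 2 := by
  intro x y
  set g := gradient f x - gradient f y
  set d := x - y
  have hexp : ‖g - μ • d‖ ^ 2 = ‖g‖ ^ 2 - 2 * μ * ⟪g, d⟫ + μ ^ 2 * ‖d‖ ^ 2 := by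
    rw [norm_sub_sq_real, real_inner_smul_right, norm_smul, mul_pow, Real.norm_eq_abs, sq_abs]
    ring
  have hco : ‖g - μ • d‖ ^ 2 ≤ (L - μ) * ⟪g - μ • d, d⟫ := by
    rcases hμL.eq_or_lt with rfl | hlt
    · have hmono := mul_sq_norm_sub_le_inner_sub hsc x y
      have hlip := pow_le_pow_left₀ (norm_nonneg g) (hsmooth x y) 2
      rw [sub_self, zero_mul, hexp]
      nlinarith
    · have hlower : ∀ a b : E, f a - μ / 2 * ‖a‖ ^ 2 + ⟪gradient f a - μ • a, b - a⟫
          ≤ f b - μ / 2 * ‖b‖ ^ 2 := by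
        intro a b
        rw [inner_sub_left, real_inner_smul_left]
        linear_combination hsc a b + μ * half_sq_norm_sub_half_sq_norm_sub_inner a b
      have hupper : ∀ a b : E, f b - μ / 2 * ‖b‖ ^ 2 ≤ f a - μ / 2 * ‖a‖ ^ 2
          + ⟪gradient f a - μ • a, b - a⟫ + (L - μ) / 2 * ‖b - a‖ ^ 2 := by
        intro a b
        rw [inner_sub_left, real_inner_smul_left]
        linear_combination le_add_inner_gradient_add_sq_norm hdiff hsmooth a b
          - μ * half_sq_norm_sub_half_sq_norm_sub_inner a b
      simpa only [sub_sub_sub_comm, ← smul_sub] using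
        sq_norm_sub_le_mul_inner_sub (F := fun z => f z - μ / 2 * ‖z‖ ^ 2)
          (G := fun z => gradient f z - μ • z) (sub_pos.2 hlt) hlower hupper x y
  rw [inner_sub_left, real_inner_smul_left, real_inner_self_eq_norm_sq, hexp] at hco
  have hpos : 0 < μ + L := by linarith
  rw [ge_iff_le, ← sub_nonneg]
  have hfrac : ⟪g, d⟫ - (μ * L / (μ + L) * ‖d‖ ^ 2 + 1 / (μ + L) * ‖g‖ ^ 2)
      = ((μ + L) * ⟪g, d⟫ - μ * L * ‖d‖ ^ 2 - ‖g‖ ^ 2) / (μ + L) := by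
    field_simp
    ring
  rw [hfrac]
  apply div_nonneg _ hpos.le
  linarith
end
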